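/- Lipschitz saturation commutes with finite products: if g_i : A_i → B_i are R-algebra morphisms for i = 1,…,n and g = ∏ g_i : ∏ A_i → ∏ B_i, then (∏ A_i)*_{∏ B_i, R} = ∏ (A_i)*_{B_i, R}. -/

import Mathlib

/-!
Evaluation at `i` gives a ring map `∏B ⊗[R] ∏B → Bᵢ ⊗[R] Bᵢ` sending `Δx` to `Δxᵢ` and the kernel
of `φ` into that of `φᵢ`, so an equation of integral dependence for `Δx` projects to one for each
`Δxᵢ`. Conversely, `b ⊗ b' ↦ eᵢb ⊗ eᵢb'` is a multiplicative, non-unital map back which carries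
`ker φᵢ` into `ker φ` and intertwines multiplication by `Δxᵢ` and by `Δx`. Pushing forward the
equations for the `Δxᵢ`, padded to a common degree, and adding them gives an equation for `Δx` whose
leading coefficient is `E = ∑ eᵢ ⊗ eᵢ`. As `E ≡ 1` modulo `ker φ`, the error `(E - 1) Δx ^ N` is
absorbed into the coefficient of `Δx ^ (N - 1)`.
-/

open TensorProduct

/-- Integral closure of an ideal: `x` satisfies an equation of integral dependence over `I`. -/
def Ideal.intClosure {S : Type*} [CommRing S] (I : Ideal S) : Set S :=
  {x | ∃ n : ℕ, 0 < n ∧ ∃ a : ℕ → S, (∀ i ∈ Finset.Icc 1 n, a i ∈ I ^ i) ∧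
      x ^ n + ∑ i ∈ Finset.Icc 1 n, a i * x ^ (n - i) = 0}

variable (R A B : Type*) [CommRing R] [CommRing A] [CommRing B]
  [Algebra R A] [Algebra R B] [Algebra A B] [IsScalarTower R A B]

/-- The diagonal map `b ↦ b ⊗ 1 - 1 ⊗ b`. -/
noncomputable def lipDelta (b : B) : B ⊗[R] B := b ⊗ₜ[R] 1 - 1 ⊗ₜ[R] b

/-- The canonical morphism `B ⊗[R] B → B ⊗[A] B`. -/
noncomputable def lipPhi : B ⊗[R] B →ₐ[R] B ⊗[A] B :=
  Algebra.TensorProduct.lift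
    ((Algebra.TensorProduct.includeLeft : B →ₐ[A] B ⊗[A] B).restrictScalars R)
    ((Algebra.TensorProduct.includeRight : B →ₐ[A] B ⊗[A] B).restrictScalars R)
    (fun _ _ => Commute.all _ _)

/-- The relative Lipschitz saturation of `A` in `B` over `R`. -/
noncomputable def lipSat : Set B :=
  {x | lipDelta R B x ∈ (RingHom.ker (lipPhi R A B)).intClosure}

namespace Ideal

variable {S T : Type*} [CommRing S] [CommRing T]

def IntDepEquation (I : Ideal S) (e x : S) (N : ℕ) : Prop :=
  ∃ a : ℕ → S, (∀ i ∈ Finset.Icc 1 N, a i ∈ I ^ i) ∧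
    e * x ^ N + ∑ i ∈ Finset.Icc 1 N, a i * x ^ (N - i) = 0

theorem mem_intClosure_iff {I : Ideal S} {x : S} :
    x ∈ I.intClosure ↔ ∃ N, 0 < N ∧ I.IntDepEquation 1 x N := by
  simp only [intClosure, IntDepEquation, one_mul, Set.mem_ofPred_eq]

namespace IntDepEquation

variable {I : Ideal S} {e e' x : S} {n N : ℕ}

theorem zero : I.IntDepEquation 0 x N :=
  ⟨0, fun _ _ => zero_mem _, by simp⟩

theorem add (h : I.IntDepEquation e x N) (h' : I.IntDepEquation e' x N) :
    I.IntDepEquation (e + e') x N := by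
  obtain ⟨a, ha, heq⟩ := h
  obtain ⟨a', ha', heq'⟩ := h'
  refine ⟨a + a', fun i hi => add_mem (ha i hi) (ha' i hi), ?_⟩
  simp only [Pi.add_apply, add_mul, Finset.sum_add_distrib]
  linear_combination heq + heq'

theorem sum {ι : Type*} {s : Finset ι} {e : ι → S} (h : ∀ i ∈ s, I.IntDepEquation (e i) x N) :
    I.IntDepEquation (∑ i ∈ s, e i) x N :=
  Finset.sum_induction e (fun y => I.IntDepEquation y x N) (fun _ _ => add) zero h

theorem mono (h : I.IntDepEquation e x n) (hnN : n ≤ N) : I.IntDepEquation e x N := by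
  obtain ⟨a, ha, heq⟩ := h
  refine ⟨fun i => if i ≤ n then a i else 0, fun i hi => ?_, ?_⟩
  · dsimp only
    split_ifs with hin
    · exact ha i (Finset.mem_Icc.2 ⟨(Finset.mem_Icc.1 hi).1, hin⟩)
    · exact zero_mem _
  · have hsum : ∑ i ∈ Finset.Icc 1 N, (if i ≤ n then a i else 0) * x ^ (N - i)
        = x ^ (N - n) * ∑ i ∈ Finset.Icc 1 n, a i * x ^ (n - i) := by
      rw [Finset.mul_sum, ← Finset.sum_subset (Finset.Icc_subset_Icc_right hnN)]
      · refine Finset.sum_congr rfl fun i hi => ?_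
        obtain ⟨-, hin⟩ := Finset.mem_Icc.1 hi
        rw [if_pos hin, mul_left_comm, ← pow_add]
        congr 2
        omega
      · intro i _ hi
        rw [if_neg (by simp_all), zero_mul]
    rw [hsum, ← Nat.sub_add_cancel hnN, pow_add, Nat.add_sub_cancel]
    linear_combination x ^ (N - n) * heq

theorem of_sub_mem (h : I.IntDepEquation e x N) (hN : 0 < N) (he : e - e' ∈ I) :
    I.IntDepEquation e' x N := by
  obtain ⟨a, ha, heq⟩ := h
  refine ⟨a + Pi.single 1 ((e - e') * x), fun i hi => add_mem (ha i hi) ?_, ?_⟩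
  · rcases eq_or_ne i 1 with rfl | hi1
    · simpa using I.mul_mem_right x he
    · simp [hi1]
  · have h1 : (1 : ℕ) ∈ Finset.Icc 1 N := Finset.mem_Icc.2 ⟨le_rfl, hN⟩
    simp only [Pi.add_apply, add_mul, Finset.sum_add_distrib, Pi.single_apply, ite_mul,
      zero_mul, Finset.sum_ite_eq', h1, if_true]
    have hxN : x ^ N = x * x ^ (N - 1) := by rw [← pow_succ', Nat.sub_add_cancel hN]
    rw [hxN] at heq ⊢
    linear_combination heq

theorem map_of_mul_map {F : Type*} [FunLike F T S] [NonUnitalRingHomClass F T S] {σ : F}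
    {J : Ideal T} {w e : T} {z : S}
    (hσ : ∀ t ∈ J, σ t ∈ I) (hz : ∀ t, z * σ t = σ (w * t)) (h : J.IntDepEquation e w N) :
    I.IntDepEquation (σ e) z N := by
  have hpow : ∀ k t, z ^ k * σ t = σ (w ^ k * t) := by
    intro k
    induction k with
    | zero => simp
    | succ k ih => intro t; rw [pow_succ', mul_assoc, ih, hz, ← mul_assoc, ← pow_succ']
  have hσpow : ∀ k, ∀ t ∈ J ^ k, σ t ∈ I ^ k := by
    intro k
    induction k with
    | zero => simp
    | succ k ih =>
      intro t ht
      rw [pow_succ] at ht ⊢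
      refine Submodule.mul_induction_on ht (fun a ha b hb => ?_) (fun a b ha hb => ?_)
      · rw [map_mul]; exact mul_mem_mul (ih a ha) (hσ b hb)
      · rw [map_add]; exact add_mem ha hb
  obtain ⟨a, ha, heq⟩ := h
  refine ⟨fun i => σ (a i), fun i hi => hσpow i _ (ha i hi), ?_⟩
  calc σ e * z ^ N + ∑ i ∈ Finset.Icc 1 N, σ (a i) * z ^ (N - i)
      = σ (e * w ^ N + ∑ i ∈ Finset.Icc 1 N, a i * w ^ (N - i)) := by
        simp only [map_add, map_sum, mul_comm _ (z ^ _), hpow, mul_comm (w ^ _)]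
    _ = 0 := by rw [heq, map_zero]

end IntDepEquation

end Ideal

theorem lipPhi_tmul (b b' : B) : lipPhi R A B (b ⊗ₜ[R] b') = b ⊗ₜ[A] b' := by
  simp [lipPhi, Algebra.TensorProduct.lift_tmul]

namespace LipschitzSaturationPi

-- The componentwise action of `∀ i, A' i` on `∀ i, B' i` would clash with the given algebra.
attribute [-instance] Pi.smul' Pi.distribMulAction' Pi.module'

variable {ι : Type*} {A' B' : ι → Type*}
  [∀ i, CommRing (A' i)] [∀ i, CommRing (B' i)] [∀ i, Algebra R (A' i)] [∀ i, Algebra R (B' i)]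
  [∀ i, Algebra (A' i) (B' i)] [Algebra (∀ i, A' i) (∀ i, B' i)]
  (hg : ∀ (a : ∀ i, A' i) (i : ι),
    algebraMap (∀ i, A' i) (∀ i, B' i) a i = algebraMap (A' i) (B' i) (a i))

section Eval

variable (B') in
noncomputable def tensorEval (i : ι) : (∀ j, B' j) ⊗[R] (∀ j, B' j) →ₐ[R] B' i ⊗[R] B' i :=
  Algebra.TensorProduct.map (Pi.evalAlgHom R B' i) (Pi.evalAlgHom R B' i)

theorem tensorEval_tmul (i : ι) (b b' : ∀ j, B' j) :
    tensorEval R B' i (b ⊗ₜ b') = b i ⊗ₜ b' i := rfl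

theorem tensorEval_lipDelta (i : ι) (x : ∀ j, B' j) :
    tensorEval R B' i (lipDelta R (∀ j, B' j) x) = lipDelta R (B' i) (x i) := by
  simp only [lipDelta, map_sub, tensorEval_tmul, Pi.one_apply]

include hg

theorem smul_apply (a : ∀ i, A' i) (b : ∀ i, B' i) (i : ι) : (a • b) i = a i • b i := by
  rw [Algebra.smul_def, Pi.mul_apply, hg, Algebra.smul_def]

noncomputable def tensorEvalOver (i : ι) :
    (∀ j, B' j) ⊗[∀ j, A' j] (∀ j, B' j) →+ B' i ⊗[A' i] B' i :=
  TensorProduct.liftAddHom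
    (AddMonoidHom.mk' (fun b => (TensorProduct.mk (A' i) (B' i) (B' i) (b i)).toAddMonoidHom.comp
        (Pi.evalAddMonoidHom B' i)) fun b b' => by ext; simp)
    fun a b b' => by simp [smul_apply hg]

theorem tensorEvalOver_tmul (i : ι) (b b' : ∀ j, B' j) :
    tensorEvalOver hg i (b ⊗ₜ b') = b i ⊗ₜ b' i := rfl

variable [∀ i, IsScalarTower R (A' i) (B' i)] [IsScalarTower R (∀ i, A' i) (∀ i, B' i)]

theorem lipPhi_tensorEval (i : ι) (t : (∀ j, B' j) ⊗[R] (∀ j, B' j)) :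
    lipPhi R (A' i) (B' i) (tensorEval R B' i t) =
      tensorEvalOver hg i (lipPhi R (∀ j, A' j) (∀ j, B' j) t) := by
  induction t using TensorProduct.induction_on with
  | zero => simp
  | add u v hu hv => simp only [map_add, hu, hv]
  | tmul b b' => rw [tensorEval_tmul, lipPhi_tmul, lipPhi_tmul, tensorEvalOver_tmul]

theorem tensorEval_mem_ker (i : ι) {t : (∀ j, B' j) ⊗[R] (∀ j, B' j)}
    (ht : t ∈ RingHom.ker (lipPhi R (∀ j, A' j) (∀ j, B' j))) :
    tensorEval R B' i t ∈ RingHom.ker (lipPhi R (A' i) (B' i)) := by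
  rw [RingHom.mem_ker] at ht ⊢
  rw [lipPhi_tensorEval R hg, ht, map_zero]

theorem apply_mem_lipSat {x : ∀ i, B' i} (hx : x ∈ lipSat R (∀ i, A' i) (∀ i, B' i)) (i : ι) :
    x i ∈ lipSat R (A' i) (B' i) := by
  obtain ⟨N, hN, h⟩ := Ideal.mem_intClosure_iff.1 hx
  refine Ideal.mem_intClosure_iff.2 ⟨N, hN, ?_⟩
  simpa using h.map_of_mul_map (σ := tensorEval R B' i) (fun _ => tensorEval_mem_ker R hg i)
    fun t => by rw [map_mul, tensorEval_lipDelta]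

end Eval

section Single

variable [DecidableEq ι]

variable (B') in
noncomputable def tensorSingle (i : ι) : B' i ⊗[R] B' i →ₙ+* (∀ j, B' j) ⊗[R] (∀ j, B' j) where
  toFun := TensorProduct.map (LinearMap.single R B' i) (LinearMap.single R B' i)
  map_mul' := LinearMap.map_mul_of_map_mul_tmul fun _ _ _ _ => by simp [Pi.single_mul]
  map_zero' := map_zero _
  map_add' := map_add _

theorem tensorSingle_tmul (i : ι) (b b' : B' i) :
    tensorSingle R B' i (b ⊗ₜ b') = Pi.single i b ⊗ₜ Pi.single i b' := rfl

theorem lipDelta_mul_tensorSingle (x : ∀ j, B' j) (i : ι) (t : B' i ⊗[R] B' i) :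
    lipDelta R (∀ j, B' j) x * tensorSingle R B' i t
      = tensorSingle R B' i (lipDelta R (B' i) (x i) * t) := by
  induction t using TensorProduct.induction_on with
  | zero => simp
  | add u v hu hv => rw [map_add, mul_add, hu, hv, mul_add, map_add]
  | tmul b b' =>
    simp only [lipDelta, sub_mul, Algebra.TensorProduct.tmul_mul_tmul, map_sub, tensorSingle_tmul,
      one_mul, Pi.single_mul_right]

include hg

theorem single_smul (i : ι) (a : A' i) (b : B' i) :
    (Pi.single i (a • b) : ∀ j, B' j) = (Pi.single i a : ∀ j, A' j) • Pi.single i b := by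
  ext j
  rw [smul_apply hg]
  rcases eq_or_ne j i with rfl | hj
  · simp
  · simp [hj]

theorem algebraMap_single_one (i : ι) :
    algebraMap (∀ j, A' j) (∀ j, B' j) (Pi.single i 1) = Pi.single i 1 := by
  ext j
  rw [hg, Pi.apply_single (fun j => algebraMap (A' j) (B' j)) (fun _ => map_zero _), map_one]

noncomputable def tensorSingleOver (i : ι) :
    B' i ⊗[A' i] B' i →+ (∀ j, B' j) ⊗[∀ j, A' j] (∀ j, B' j) :=
  TensorProduct.liftAddHom
    (AddMonoidHom.mk' (fun b => ((TensorProduct.mk (∀ j, A' j) (∀ j, B' j) (∀ j, B' j)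
        (Pi.single i b)).toAddMonoidHom.comp (AddMonoidHom.single B' i)))
      fun b b' => by ext; simp [Pi.single_add])
    fun a b b' => by simp [single_smul hg]

theorem tensorSingleOver_tmul (i : ι) (b b' : B' i) :
    tensorSingleOver hg i (b ⊗ₜ b') = Pi.single i b ⊗ₜ Pi.single i b' := rfl

variable [IsScalarTower R (∀ i, A' i) (∀ i, B' i)]

theorem sum_tensorSingle_one_sub_one_mem_ker [Fintype ι] :
    ∑ i, tensorSingle R B' i 1 - 1 ∈ RingHom.ker (lipPhi R (∀ j, A' j) (∀ j, B' j)) := by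
  have hsingle : ∀ i, lipPhi R (∀ j, A' j) (∀ j, B' j) (tensorSingle R B' i 1) =
      1 ⊗ₜ Pi.single i 1 := fun i => by
    rw [Algebra.TensorProduct.one_def, tensorSingle_tmul, lipPhi_tmul]
    calc (Pi.single i 1 : ∀ j, B' j) ⊗ₜ[∀ j, A' j] (Pi.single i 1 : ∀ j, B' j)
        = ((Pi.single i 1 : ∀ j, A' j) • 1) ⊗ₜ Pi.single i 1 := by
          rw [Algebra.smul_def, mul_one, algebraMap_single_one hg]
      _ = (Pi.single i 1 : ∀ j, A' j) • (1 ⊗ₜ Pi.single i 1) := (smul_tmul' _ _ _).symm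
      _ = 1 ⊗ₜ ((Pi.single i 1 : ∀ j, A' j) • Pi.single i 1) := (map_smul (mk _ _ _ 1) _ _).symm
      _ = 1 ⊗ₜ Pi.single i 1 := by rw [← single_smul hg, one_smul]
  rw [RingHom.mem_ker, map_sub, map_sum, map_one, sub_eq_zero]
  simp only [hsingle, ← TensorProduct.tmul_sum, Finset.univ_sum_single, Pi.one_def]
  exact Algebra.TensorProduct.one_def.symm

variable [∀ i, IsScalarTower R (A' i) (B' i)]

theorem lipPhi_tensorSingle (i : ι) (t : B' i ⊗[R] B' i) :
    lipPhi R (∀ j, A' j) (∀ j, B' j) (tensorSingle R B' i t) =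
      tensorSingleOver hg i (lipPhi R (A' i) (B' i) t) := by
  induction t using TensorProduct.induction_on with
  | zero => simp
  | add u v hu hv => simp only [map_add, hu, hv]
  | tmul b b' => rw [tensorSingle_tmul, lipPhi_tmul, lipPhi_tmul, tensorSingleOver_tmul]

theorem tensorSingle_mem_ker (i : ι) {t : B' i ⊗[R] B' i}
    (ht : t ∈ RingHom.ker (lipPhi R (A' i) (B' i))) :
    tensorSingle R B' i t ∈ RingHom.ker (lipPhi R (∀ j, A' j) (∀ j, B' j)) := by
  rw [RingHom.mem_ker] at ht ⊢
  rw [lipPhi_tensorSingle R hg, ht, map_zero]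

theorem mem_lipSat_of_forall [Fintype ι] {x : ∀ i, B' i}
    (hx : ∀ i, x i ∈ lipSat R (A' i) (B' i)) : x ∈ lipSat R (∀ i, A' i) (∀ i, B' i) := by
  choose N hN h using fun i => Ideal.mem_intClosure_iff.1 (hx i)
  have hM : ∀ i, N i ≤ Finset.univ.sup N + 1 :=
    fun i => (Finset.le_sup (Finset.mem_univ i)).trans (Nat.le_succ _)
  have hsum := Ideal.IntDepEquation.sum fun i (_ : i ∈ Finset.univ) =>
    ((h i).mono (hM i)).map_of_mul_map (fun _ => tensorSingle_mem_ker R hg i)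
      (lipDelta_mul_tensorSingle R x i)
  exact Ideal.mem_intClosure_iff.2 ⟨_, Nat.succ_pos _,
    hsum.of_sub_mem (Nat.succ_pos _) (sum_tensorSingle_one_sub_one_mem_ker R hg)⟩

end Single

end LipschitzSaturationPi

/-- Lipschitz saturation commutes with finite products: for `R`-algebra morphisms
`gᵢ : Aᵢ → Bᵢ` and the product morphism `g = ∏ gᵢ : ∏ Aᵢ → ∏ Bᵢ` (acting
componentwise), one has `(∏ Aᵢ)*_{∏ Bᵢ, R} = ∏ (Aᵢ)*_{Bᵢ, R}`. -/
theorem lipSat_pi (R' : Type*) [CommRing R'] {n : ℕ} (A' B' : Fin n → Type*)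
    [∀ i, CommRing (A' i)] [∀ i, CommRing (B' i)]
    [∀ i, Algebra R' (A' i)] [∀ i, Algebra R' (B' i)]
    [∀ i, Algebra (A' i) (B' i)] [∀ i, IsScalarTower R' (A' i) (B' i)]
    [Algebra (∀ i, A' i) (∀ i, B' i)]
    (hg : ∀ (a : ∀ i, A' i) (i : Fin n),
      algebraMap (∀ i, A' i) (∀ i, B' i) a i = algebraMap (A' i) (B' i) (a i))
    (htower : ∀ r : R', algebraMap R' (∀ i, B' i) r =
      algebraMap (∀ i, A' i) (∀ i, B' i) (algebraMap R' (∀ i, A' i) r)) :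
    @lipSat R' (∀ i, A' i) (∀ i, B' i) _ _ _ _ _ _
        (IsScalarTower.of_algebraMap_eq htower) =
      {x | ∀ i, x i ∈ lipSat R' (A' i) (B' i)} := by
  have := IsScalarTower.of_algebraMap_eq htower
  ext x
  exact ⟨fun hx i => LipschitzSaturationPi.apply_mem_lipSat R' hg hx i,
    LipschitzSaturationPi.mem_lipSat_of_forall R' hg⟩
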